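/- If an abelian q-group A (q odd) acts faithfully and half-transitively (all orbits of nonidentity elements have equal size) on an elementary abelian group V of coprime order, then A is cyclic. -/

import Mathlib

section AuxGroup

/-- A subgroup `H ≤ K` with at least the cardinality of `K` equals `K`. -/
theorem subgroup_eq_of_le_of_card_le' {G : Type*} [Group G] [Finite G] {H K : Subgroup G}
    (h : H ≤ K) (hc : Nat.card K ≤ Nat.card H) : H = K := by
  apply SetLike.ext'
  refine Set.eq_of_subset_of_ncard_le h ?_ (Set.toFinite _)
  rwa [← Nat.card_coe_set_eq, ← Nat.card_coe_set_eq]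

theorem card_sup_mul_card_inf' {G : Type*} [CommGroup G] (H K : Subgroup G) :
    Nat.card ↥(H ⊔ K) * Nat.card ↥(H ⊓ K) = Nat.card ↥H * Nat.card ↥K := by
  have key : ∀ (L M : Subgroup G), L ≤ M → L.relIndex M * Nat.card ↥L = Nat.card ↥M := by
    intro L M hLM
    have h1 := Subgroup.index_mul_card (L.subgroupOf M)
    rwa [Nat.card_congr (Subgroup.subgroupOfEquivOfLe hLM).toEquiv] at h1
  have h2 : K.relIndex (H ⊔ K) = (H ⊓ K).relIndex H := by
    rw [Subgroup.relIndex_sup_right, ← Subgroup.inf_relIndex_left]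
  calc Nat.card ↥(H ⊔ K) * Nat.card ↥(H ⊓ K)
      = (K.relIndex (H ⊔ K) * Nat.card ↥K) * Nat.card ↥(H ⊓ K) := by
        rw [key K (H ⊔ K) le_sup_right]
    _ = ((H ⊓ K).relIndex H * Nat.card ↥(H ⊓ K)) * Nat.card ↥K := by rw [h2]; ring
    _ = Nat.card ↥H * Nat.card ↥K := by rw [key (H ⊓ K) H inf_le_left]

/-- Iterated fixed points. -/
theorem pow_smul_fix {A V : Type*} [Monoid A] [Monoid V] [MulDistribMulAction A V]
    (c : A) {w : V} (h : c • w = w) (n : ℕ) : c ^ n • w = w := by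
  induction n with
  | zero => rw [pow_zero, one_smul]
  | succ n ih => rw [pow_succ, mul_smul, h, ih]

end AuxGroup

section NormMap

variable {q : ℕ} {A V : Type*} [CommGroup A] [CommGroup V] [MulDistribMulAction A V]

/-- The "norm" map `w ↦ ∏_{j<q} c^j • w`. -/
def Nmap (q : ℕ) [NeZero q] {A V : Type*} [Monoid A] [CommGroup V] [MulDistribMulAction A V]
    (c : A) : V →* V where
  toFun w := ∏ j : ZMod q, c ^ (ZMod.val j) • w
  map_one' := by simp
  map_mul' x y := by
    rw [← Finset.prod_mul_distrib]
    exact Finset.prod_congr rfl fun j _ => smul_mul' _ _ _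

theorem Nmap_apply (q : ℕ) [NeZero q] {A V : Type*} [Monoid A] [CommGroup V]
    [MulDistribMulAction A V] (c : A) (w : V) :
    Nmap q c w = ∏ j : ZMod q, c ^ (ZMod.val j) • w := rfl

theorem Nmap_fix [NeZero q] (hq : q.Prime) (c : A) (hc : c ^ q = 1) (w : V) :
    c • Nmap q c w = Nmap q c w := by
  haveI : Fact (1 < q) := ⟨hq.one_lt⟩
  show c • ∏ j : ZMod q, c ^ (ZMod.val j) • w = ∏ j : ZMod q, c ^ (ZMod.val j) • w
  rw [Finset.smul_prod']
  have h1 : ∀ j : ZMod q, c • (c ^ ZMod.val j • w) = c ^ ZMod.val (j + 1) • w := by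
    intro j
    rw [smul_smul, ← pow_succ', ZMod.val_add, ZMod.val_one, ← pow_eq_pow_mod _ hc]
  rw [Finset.prod_congr rfl fun j _ => h1 j]
  exact Fintype.prod_equiv (Equiv.addRight (1 : ZMod q)) _ _ fun j => rfl

theorem Nmap_fix_of [NeZero q] (c d : A) {w : V} (hd : d • w = w) :
    d • Nmap q c w = Nmap q c w := by
  show d • ∏ j : ZMod q, c ^ (ZMod.val j) • w = ∏ j : ZMod q, c ^ (ZMod.val j) • w
  rw [Finset.smul_prod']
  refine Finset.prod_congr rfl fun j _ => ?_
  rw [smul_smul, mul_comm, ← smul_smul, hd]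

theorem Nmap_of_fix [NeZero q] (hq : q.Prime) {c : A} {w : V} (hw : c • w = w) :
    Nmap q c w = w ^ q := by
  show (∏ j : ZMod q, c ^ (ZMod.val j) • w) = w ^ q
  rw [Finset.prod_congr rfl fun (j : ZMod q) _ => pow_smul_fix c hw (ZMod.val j)]
  rw [Finset.prod_const, Finset.card_univ, ZMod.card]

/-- The key norm computation: if `a, b` have order dividing `q` and all the `q+1`
"line generators" act without nontrivial fixed points on the (invariant) subgroup `W`,
then every element of `W` has order dividing `q`. -/
theorem norm_core (hq : q.Prime) (a b : A) (ha : a ^ q = 1) (hb : b ^ q = 1)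
    (W : Subgroup V) (hWs : ∀ (x : A), ∀ w ∈ W, x • w ∈ W)
    (hfb : ∀ w ∈ W, w ≠ 1 → b • w ≠ w)
    (hfa : ∀ (i : ZMod q), ∀ w ∈ W, w ≠ 1 → (a * b ^ ZMod.val i) • w ≠ w)
    {w : V} (hw : w ∈ W) : w ^ q = 1 := by
  letI : NeZero q := ⟨hq.ne_zero⟩
  haveI : Fact q.Prime := ⟨hq⟩
  have hWmem : ∀ (c : A), Nmap q c w ∈ W := fun c =>
    Subgroup.prod_mem W (fun j _ => hWs _ w hw)
  have hone : ∀ (c : A), c ^ q = 1 → (∀ w' ∈ W, w' ≠ 1 → c • w' ≠ w') → Nmap q c w = 1 := by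
    intro c hc hf
    by_contra hne
    exact hf _ (hWmem c) hne (Nmap_fix hq c hc w)
  have hPb : Nmap q b w = 1 := hone b hb hfb
  have hcq : ∀ i : ZMod q, (a * b ^ ZMod.val i) ^ q = 1 := by
    intro i
    rw [mul_pow, ha, one_mul, ← pow_mul, mul_comm (ZMod.val i) q, pow_mul, hb, one_pow]
  have hPa : ∀ i : ZMod q, Nmap q (a * b ^ ZMod.val i) w = 1 := fun i =>
    hone _ (hcq i) (hfa i)
  -- now the product identity
  have hterm : ∀ i j : ZMod q,
      (a * b ^ ZMod.val i) ^ ZMod.val j • w = a ^ ZMod.val j • (b ^ ZMod.val (i * j) • w) := by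
    intro i j
    rw [mul_pow, ← pow_mul, mul_smul, ZMod.val_mul, ← pow_eq_pow_mod _ hb]
  have key : (1 : V) = w ^ q := by
    calc (1 : V) = ∏ i : ZMod q, Nmap q (a * b ^ ZMod.val i) w := by
          rw [Finset.prod_congr rfl fun i _ => hPa i, Finset.prod_const, one_pow]
      _ = ∏ i : ZMod q, ∏ j : ZMod q, a ^ ZMod.val j • (b ^ ZMod.val (i * j) • w) := by
          refine Finset.prod_congr rfl fun i _ => ?_
          exact Finset.prod_congr rfl fun j _ => hterm i j
      _ = ∏ j : ZMod q, ∏ i : ZMod q, a ^ ZMod.val j • (b ^ ZMod.val (i * j) • w) :=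
          Finset.prod_comm
      _ = ∏ j : ZMod q, a ^ ZMod.val j • (∏ i : ZMod q, b ^ ZMod.val (i * j) • w) := by
          exact Finset.prod_congr rfl fun j _ => (Finset.smul_prod').symm
      _ = w ^ q := by
          rw [Fintype.prod_eq_single (0 : ZMod q)]
          · simp only [ZMod.val_zero, pow_zero, one_smul, mul_zero]
            rw [Finset.prod_const, Finset.card_univ, ZMod.card]
          · intro j hj
            have hinner : (∏ i : ZMod q, b ^ ZMod.val (i * j) • w) = Nmap q b w :=
              Fintype.prod_equiv (Equiv.mulRight₀ j hj) _ _ fun i => rfl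
            rw [hinner, hPb, smul_one]
  exact key.symm

end NormMap

theorem arith_lemma' {ι : Type*} (y : ι → ℕ) (S : Finset ι) :
    S.Nonempty → (∀ κ ∈ S, 2 ≤ y κ) → (∑ κ ∈ S, (y κ - 1)) + S.card ≤ ∏ κ ∈ S, y κ := by
  classical
  induction S using Finset.cons_induction with
  | empty => intro h; exact absurd h (by simp)
  | cons a s ha ih =>
    intro _ hy2
    rw [Finset.prod_cons, Finset.sum_cons, Finset.card_cons]
    have hya : 2 ≤ y a := hy2 a (Finset.mem_cons_self a s)
    rcases s.eq_empty_or_nonempty with rfl | hs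
    · simp only [Finset.prod_empty, Finset.sum_empty, Finset.card_empty, mul_one, add_zero,
        zero_add]
      omega
    · have key := ih hs (fun κ hκ => hy2 κ (Finset.mem_cons_of_mem hκ))
      have hcpos : 1 ≤ s.card := Finset.card_pos.mpr hs
      have hsge : 1 ≤ ∑ κ ∈ s, (y κ - 1) := by
        obtain ⟨κ₀, hκ₀⟩ := hs
        calc 1 ≤ y κ₀ - 1 := by
              have := hy2 κ₀ (Finset.mem_cons_of_mem hκ₀); omega
          _ ≤ ∑ κ ∈ s, (y κ - 1) :=
              Finset.single_le_sum (f := fun κ => y κ - 1) (fun i _ => Nat.zero_le _) hκ₀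
      have hprod2 : 2 ≤ ∏ κ ∈ s, y κ := by omega
      have h1 : y a * ∏ κ ∈ s, y κ = (y a - 1) * ∏ κ ∈ s, y κ + ∏ κ ∈ s, y κ := by
        conv_lhs => rw [show y a = (y a - 1) + 1 from by omega]
        rw [add_mul, one_mul]
      have h2 : (y a - 1) * 2 ≤ (y a - 1) * ∏ κ ∈ s, y κ :=
        Nat.mul_le_mul_left _ hprod2
      omega

theorem exists_indep {q : ℕ} (hq : q.Prime) {A : Type*} [CommGroup A] [Finite A]
    (hA : IsPGroup q A) (hnc : ¬ IsCyclic A) :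
    ∃ a b : A, orderOf a = q ∧ orderOf b = q ∧ b ∉ Subgroup.zpowers a := by
  haveI : Fact q.Prime := ⟨hq⟩
  obtain ⟨E, hcardA⟩ := IsPGroup.iff_card.mp hA
  have hexpdvd : Monoid.exponent A ∣ q ^ E := hcardA ▸ Group.exponent_dvd_nat_card
  obtain ⟨e, _, hexp⟩ := (Nat.dvd_prime_pow hq).mp hexpdvd
  obtain ⟨a₀, ha₀⟩ := Monoid.exists_orderOf_eq_exponent (Monoid.ExponentExists.of_finite (G := A))
  rcases Nat.eq_zero_or_pos e with rfl | he
  · exfalso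
    apply hnc
    have hsub : ∀ x : A, x = 1 := by
      intro x
      have := Monoid.order_dvd_exponent x
      rw [hexp, pow_zero, Nat.dvd_one] at this
      exact orderOf_eq_one_iff.mp this
    haveI : Subsingleton A := ⟨fun x y => by rw [hsub x, hsub y]⟩
    infer_instance
  -- a₀ has maximal order q^e
  rw [hexp] at ha₀
  have hZ0 : ∃ x : A, x ∉ Subgroup.zpowers a₀ := by
    by_contra h
    push_neg at h
    exact hnc ⟨a₀, h⟩
  obtain ⟨x₀, hx₀⟩ := hZ0
  -- descent: find y ∉ ⟨a₀⟩ with y^q ∈ ⟨a₀⟩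
  have desc : ∀ (m : ℕ) (x : A), orderOf x = m → x ∉ Subgroup.zpowers a₀ →
      ∃ y, y ∉ Subgroup.zpowers a₀ ∧ y ^ q ∈ Subgroup.zpowers a₀ := by
    intro m
    induction m using Nat.strong_induction_on with
    | _ m ih =>
      intro x hx hxZ
      by_cases hxq : x ^ q ∈ Subgroup.zpowers a₀
      · exact ⟨x, hxZ, hxq⟩
      · refine ih (orderOf (x ^ q)) ?_ (x ^ q) rfl hxq
        subst hx
        have hx1 : x ≠ 1 := fun h => hxZ (h ▸ Subgroup.one_mem _)
        have hordpos : 0 < orderOf x := orderOf_pos x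
        obtain ⟨k, hk⟩ := hA x
        have hdvd : orderOf x ∣ q ^ k := orderOf_dvd_of_pow_eq_one hk
        obtain ⟨f, _, hf⟩ := (Nat.dvd_prime_pow hq).mp hdvd
        have hf0 : f ≠ 0 := by
          rintro rfl
          rw [pow_zero] at hf
          exact hx1 (orderOf_eq_one_iff.mp hf)
        have hqord : q ∣ orderOf x := hf ▸ dvd_pow_self q hf0
        rw [orderOf_pow x]
        rw [Nat.gcd_eq_right hqord]
        exact Nat.div_lt_self hordpos hq.one_lt
  obtain ⟨y, hyZ, hyq⟩ := desc _ x₀ rfl hx₀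
  obtain ⟨s, hs⟩ := Subgroup.mem_zpowers_iff.mp hyq
  -- q ∣ s
  have hyE : y ^ q ^ e = 1 := by
    rw [← hexp]; exact Monoid.pow_exponent_eq_one y
  have h2' : (y ^ q) ^ (q ^ (e - 1) : ℕ) = 1 := by
    rw [← pow_mul]
    have hqe : q * q ^ (e - 1) = q ^ e := by
      rw [← pow_succ']
      congr 1
      omega
    rw [hqe, hyE]
  have hzero : a₀ ^ (s * ((q : ℤ) ^ (e - 1))) = 1 := by
    have h4 : a₀ ^ (s * ((q ^ (e - 1) : ℕ) : ℤ)) = 1 := by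
      rw [zpow_mul, hs, zpow_natCast, h2']
    rw [← h4]
    congr 1
  have hdvd2 : ((q : ℤ) ^ e) ∣ s * (q : ℤ) ^ (e - 1) := by
    have h5 := orderOf_dvd_iff_zpow_eq_one.mpr hzero
    rw [ha₀] at h5
    exact_mod_cast h5
  have hqs : (q : ℤ) ∣ s := by
    have he1 : (q : ℤ) ^ e = (q : ℤ) ^ (e - 1) * q := by
      rw [← pow_succ]
      congr 1
      omega
    rw [he1, mul_comm s] at hdvd2
    have hqne : ((q : ℤ) ^ (e - 1)) ≠ 0 := by
      have : (q : ℤ) ≠ 0 := by exact_mod_cast hq.ne_zero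
      positivity
    exact (mul_dvd_mul_iff_left hqne).mp hdvd2
  obtain ⟨t, ht⟩ := hqs
  set b := y * a₀ ^ (-t) with hbdef
  have hbZ : b ∉ Subgroup.zpowers a₀ := by
    intro hb
    apply hyZ
    have hy' : y = b * a₀ ^ t := by rw [hbdef]; group
    rw [hy']
    exact Subgroup.mul_mem _ hb (Subgroup.zpow_mem _ (Subgroup.mem_zpowers a₀) t)
  have hbq : b ^ q = 1 := by
    have h3 : (a₀ ^ (-t)) ^ (q : ℕ) = (y ^ q)⁻¹ := by
      calc (a₀ ^ (-t)) ^ (q : ℕ) = a₀ ^ ((-t) * (q : ℤ)) := by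
            rw [← zpow_natCast (a₀ ^ (-t)) q, ← zpow_mul]
        _ = a₀ ^ (-s) := by
            congr 1
            rw [ht]
            ring
        _ = (a₀ ^ s)⁻¹ := by rw [zpow_neg]
        _ = (y ^ q)⁻¹ := by rw [hs]
    rw [hbdef, mul_pow, h3]
    group
  have hb1 : b ≠ 1 := fun h => hbZ (h ▸ Subgroup.one_mem _)
  have hordb : orderOf b = q := orderOf_eq_prime hbq hb1
  set a' := a₀ ^ (q ^ (e - 1) : ℕ) with ha'
  have horda' : orderOf a' = q := by
    rw [ha', orderOf_pow, ha₀, Nat.gcd_eq_right (pow_dvd_pow q (by omega)),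
      Nat.pow_div (by omega) hq.pos, show e - (e - 1) = 1 from by omega, pow_one]
  have hsub : Subgroup.zpowers a' ≤ Subgroup.zpowers a₀ :=
    Subgroup.zpowers_le.mpr (Subgroup.pow_mem _ (Subgroup.mem_zpowers a₀) _)
  exact ⟨a', b, horda', hordb, fun h => hbZ (hsub h)⟩
/-- The subgroup of points fixed by `c`. -/
def fixSub {A V : Type*} [Monoid A] [Group V] [MulDistribMulAction A V] (c : A) : Subgroup V where
  carrier := {v | c • v = v}
  one_mem' := smul_one c
  mul_mem' {x y} hx hy := by
    simp only [Set.mem_setOf_eq] at *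
    rw [smul_mul', hx, hy]
  inv_mem' {x} hx := by
    simp only [Set.mem_setOf_eq] at *
    rw [smul_inv', hx]

theorem smul_fix_inv {A V : Type*} [Group A] [Group V] [MulDistribMulAction A V] (c : A)
    {v : V} (h : c • v = v) : c⁻¹ • v = v := by
  conv_lhs => rw [← h]
  rw [inv_smul_smul]

theorem mem_fixSub {A V : Type*} [Monoid A] [Group V] [MulDistribMulAction A V] {c : A} {v : V} :
    v ∈ fixSub c ↔ c • v = v := Iff.rfl

theorem stmt_15' {q p : ℕ} (hq : q.Prime) (hp : p.Prime)
    {A V : Type*} [CommGroup A] [Fintype A] [CommGroup V] [Fintype V]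
    (hVel : ∀ x : V, x ^ p = 1)
    (hA : IsPGroup q A)
    (hcop : Nat.Coprime (Nat.card A) (Nat.card V))
    [MulDistribMulAction A V]
    (hfaith : ∀ a : A, (∀ v : V, a • v = v) → a = 1)
    (hhalf : ∃ n : ℕ, ∀ v : V, v ≠ 1 → Nat.card (MulAction.orbit A v) = n) :
    IsCyclic A := by
  haveI : Fact q.Prime := ⟨hq⟩
  haveI : NeZero q := ⟨hq.ne_zero⟩
  classical
  by_contra hnc
  obtain ⟨a, b, hoa, hob, hab⟩ := exists_indep hq hA hnc
  obtain ⟨n, hn⟩ := hhalf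
  have haq : a ^ q = 1 := by rw [← hoa]; exact pow_orderOf_eq_one a
  have hbq : b ^ q = 1 := by rw [← hob]; exact pow_orderOf_eq_one b
  have ha1 : a ≠ 1 := by
    intro h
    rw [h, orderOf_one] at hoa
    exact hq.one_lt.ne' hoa.symm
  have hqA : q ∣ Nat.card A := hoa ▸ orderOf_dvd_natCard a
  have hqV : Nat.Coprime q (Nat.card V) := Nat.Coprime.coprime_dvd_left hqA hcop
  -- orbit-stabilizer and equal stabilizers
  have horb : ∀ v : V,
      Nat.card (MulAction.orbit A v) * Nat.card (MulAction.stabilizer A v) = Nat.card A := by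
    intro v
    rw [Nat.card_eq_fintype_card, Nat.card_eq_fintype_card, Nat.card_eq_fintype_card]
    exact MulAction.card_orbit_mul_card_stabilizer_eq_card_group A v
  have hstab : ∀ v w : V, v ≠ 1 → w ≠ 1 → MulAction.stabilizer A v ≤ MulAction.stabilizer A w →
      MulAction.stabilizer A v = MulAction.stabilizer A w := by
    intro v w hv hw hle
    have hcv := horb v
    have hcw := horb w
    rw [hn v hv] at hcv
    rw [hn w hw] at hcw
    have hA0 : Nat.card A ≠ 0 := Nat.card_pos.ne'
    have hn0 : 0 < n := by
      rcases Nat.eq_zero_or_pos n with rfl | h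
      · rw [zero_mul] at hcv
        exact absurd hcv.symm hA0
      · exact h
    have hcards : Nat.card (MulAction.stabilizer A v) = Nat.card (MulAction.stabilizer A w) :=
      Nat.eq_of_mul_eq_mul_left hn0 (hcv.trans hcw.symm)
    exact subgroup_eq_of_le_of_card_le' hle hcards.ge
  -- the q+1 line generators
  set g : Option (ZMod q) → A := fun κ => κ.elim b fun i => a * b ^ (ZMod.val i) with hgdef
  have hgnone : g none = b := rfl
  have hgsome : ∀ i, g (some i) = a * b ^ (ZMod.val i) := fun _ => rfl
  have hgq : ∀ κ, g κ ^ q = 1 := by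
    rintro (_ | i)
    · exact hbq
    · rw [hgsome, mul_pow, haq, one_mul, ← pow_mul, mul_comm (ZMod.val i) q, pow_mul, hbq,
        one_pow]
  have hg1 : ∀ κ, g κ ≠ 1 := by
    rintro (_ | i) h
    · rw [hgnone] at h
      rw [h, orderOf_one] at hob
      exact hq.one_lt.ne' hob.symm
    · rw [hgsome] at h
      have hmem : a ∈ Subgroup.zpowers b := by
        rw [eq_inv_of_mul_eq_one_left h]
        exact Subgroup.inv_mem _ (Subgroup.pow_mem _ (Subgroup.mem_zpowers b) _)
      have hle : Subgroup.zpowers a ≤ Subgroup.zpowers b := Subgroup.zpowers_le.mpr hmem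
      have heq : Subgroup.zpowers a = Subgroup.zpowers b := by
        apply subgroup_eq_of_le_of_card_le' hle
        rw [Nat.card_zpowers, Nat.card_zpowers, hoa, hob]
      exact hab (heq ▸ Subgroup.mem_zpowers b)
  set F : Option (ZMod q) → Subgroup V := fun κ => fixSub (g κ) with hFdef
  set Z : Subgroup V := fixSub a ⊓ fixSub b with hZdef
  have hmemZ : ∀ v : V, v ∈ Z ↔ (a • v = v ∧ b • v = v) := by
    intro v
    rw [hZdef, Subgroup.mem_inf, mem_fixSub, mem_fixSub]
  have hZF : ∀ κ, Z ≤ F κ := by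
    rintro (_ | i) v hv
    · exact ((hmemZ v).mp hv).2
    · obtain ⟨hva, hvb⟩ := (hmemZ v).mp hv
      show (a * b ^ (ZMod.val i)) • v = v
      rw [mul_smul, pow_smul_fix b hvb, hva]
  -- distinct lines intersect in Z
  have hbpow : ∀ (k : ℕ) (v : V), ¬ (q ∣ k) → b ^ k • v = v → b • v = v := by
    intro k v hk hbk
    have hco : Nat.Coprime k q := (Nat.coprime_comm.mp ((hq.coprime_iff_not_dvd).mpr hk))
    obtain ⟨s, -, hs⟩ := Nat.exists_mul_mod_eq_one_of_coprime hco hq.one_lt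
    have hb' : b = (b ^ k) ^ s := by
      rw [← pow_mul, pow_eq_pow_mod _ hbq, hs, pow_one]
    rw [hb']
    exact pow_smul_fix _ hbk s
  have hvalndvd : ∀ (k : ZMod q), k ≠ 0 → ¬ (q ∣ ZMod.val k) := by
    intro k hk hdvd
    have h1 : ZMod.val k < q := ZMod.val_lt k
    have h2 : ZMod.val k ≠ 0 := fun h => hk ((ZMod.val_eq_zero k).mp h)
    have := Nat.le_of_dvd (Nat.pos_of_ne_zero h2) hdvd
    omega
  have hFZ : ∀ κ κ', κ ≠ κ' → F κ ⊓ F κ' ≤ Z := by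
    have key : ∀ (i j : ZMod q) (v : V), i ≠ j → (a * b ^ (ZMod.val i)) • v = v →
        (a * b ^ (ZMod.val j)) • v = v → b • v = v := by
      intro i j v hij hi hj
      have e1 : (a * b ^ (ZMod.val i)) * b ^ (ZMod.val (j - i)) = a * b ^ (ZMod.val j) := by
        rw [mul_assoc, ← pow_add]
        congr 1
        rw [pow_eq_pow_mod _ hbq, ← ZMod.val_add, show i + (j - i) = j from by ring]
      have hk : (b ^ (ZMod.val (j - i))) • v = v := by
        have e2 : (b ^ (ZMod.val (j - i))) • v
            = ((a * b ^ (ZMod.val i))⁻¹ * (a * b ^ (ZMod.val j))) • v := by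
          rw [← e1, inv_mul_cancel_left]
        have e3 : (a * b ^ (ZMod.val i))⁻¹ • v = v := smul_fix_inv _ hi
        rw [e2, mul_smul, hj, e3]
      exact hbpow _ v (hvalndvd _ (sub_ne_zero.mpr (Ne.symm hij))) hk
    have keya : ∀ (i : ZMod q) (v : V), (a * b ^ (ZMod.val i)) • v = v → b • v = v →
        a • v = v := by
      intro i v hi hb'
      have hsplit : a = (a * b ^ (ZMod.val i)) * (b ^ (ZMod.val i))⁻¹ := by group
      have hbinv : (b ^ (ZMod.val i))⁻¹ • v = v := smul_fix_inv _ (pow_smul_fix b hb' _)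
      rw [hsplit, mul_smul, hbinv, hi]
    rintro (_ | i) (_ | j) hne v hv <;>
      obtain ⟨h1, h2⟩ := Subgroup.mem_inf.mp hv
    · exact absurd rfl hne
    · exact (hmemZ v).mpr ⟨keya j v h2 h1, h1⟩
    · exact (hmemZ v).mpr ⟨keya i v h1 h2, h2⟩
    · have hij : i ≠ j := fun h => hne (by rw [h])
      have hb' : b • v = v := key i j v hij h1 h2
      exact (hmemZ v).mpr ⟨keya i v h1 hb', hb'⟩
  -- every nontrivial element is fixed by some line
  have hG1 : ∀ v : V, v ≠ 1 → ∃ κ, v ∈ F κ := by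
    intro v hv
    by_contra hcon
    push_neg at hcon
    set K := MulAction.stabilizer A v with hK
    set W : Subgroup V := ⨅ x : K, fixSub (x : A) with hW
    have hmemW : ∀ w : V, w ∈ W ↔ ∀ x ∈ K, x • w = w := by
      intro w
      rw [hW, Subgroup.mem_iInf]
      constructor
      · intro h x hx
        exact h ⟨x, hx⟩
      · intro h x
        exact h x.1 x.2
    have hWs : ∀ (x : A), ∀ w ∈ W, x • w ∈ W := by
      intro x w hw
      rw [hmemW] at hw ⊢
      intro y hy
      rw [smul_smul, mul_comm, ← smul_smul, hw y hy]
    have hvW : v ∈ W := (hmemW v).mpr fun x hx => hx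
    have hfpf : ∀ κ, ∀ w ∈ W, w ≠ 1 → g κ • w ≠ w := by
      intro κ w hw hw1 heq
      have hle : K ≤ MulAction.stabilizer A w := by
        intro x hx
        rw [MulAction.mem_stabilizer_iff]
        exact (hmemW w).mp hw x hx
      have hKeq := hstab v w hv hw1 hle
      apply hcon κ
      show g κ • v = v
      have : g κ ∈ K := by
        rw [hK, hKeq]
        exact heq
      exact this
    have hvq : v ^ q = 1 :=
      norm_core hq a b haq hbq W hWs (fun w hw h1 => hfpf none w hw h1)
        (fun i w hw h1 => hfpf (some i) w hw h1) hvW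
    have hoq : orderOf v = q := orderOf_eq_prime hvq hv
    have hqVd : q ∣ Nat.card V := hoq ▸ orderOf_dvd_natCard v
    have hgcd : q ∣ Nat.gcd q (Nat.card V) := Nat.dvd_gcd dvd_rfl hqVd
    rw [Nat.Coprime.gcd_eq_one hqV] at hgcd
    exact hq.one_lt.ne' (Nat.dvd_one.mp hgcd)
  -- endgame
  have hxqZ : ∀ x : V, x ^ q ∈ Z → x ∈ Z := by
    intro x hx
    rcases eq_or_ne (orderOf x) 1 with h1 | h1
    · rw [orderOf_eq_one_iff.mp h1]
      exact Z.one_mem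
    · have hdvd : orderOf x ∣ Nat.card V := orderOf_dvd_natCard x
      have hco : Nat.Coprime q (orderOf x) := Nat.Coprime.coprime_dvd_right hdvd hqV
      have hpos : 0 < orderOf x := orderOf_pos x
      have hlt : 1 < orderOf x := by omega
      obtain ⟨s, -, hs⟩ := Nat.exists_mul_mod_eq_one_of_coprime hco hlt
      have hx' : x = (x ^ q) ^ s := by
        rw [← pow_mul, ← pow_mod_orderOf, hs, pow_one]
      rw [hx']
      exact Subgroup.pow_mem _ hx s
  have hNZ : ∀ (κ' κ : Option (ZMod q)), κ ≠ κ' → ∀ w ∈ F κ, Nmap q (g κ') w ∈ Z := by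
    intro κ' κ hne w hw
    have h1 : Nmap q (g κ') w ∈ F κ' := mem_fixSub.mpr (Nmap_fix hq (g κ') (hgq κ') w)
    have h2 : Nmap q (g κ') w ∈ F κ :=
      mem_fixSub.mpr (Nmap_fix_of (g κ') (g κ) (mem_fixSub.mp hw))
    exact hFZ κ' κ (Ne.symm hne) (Subgroup.mem_inf.mpr ⟨h1, h2⟩)
  have hsup : ∀ S : Finset (Option (ZMod q)), S.Nonempty →
      Nat.card ↥(⨆ κ ∈ S, F κ) * Nat.card ↥Z ^ S.card
        = (∏ κ ∈ S, Nat.card ↥(F κ)) * Nat.card ↥Z := by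
    intro S hS
    induction S using Finset.cons_induction with
    | empty => exact absurd hS (by simp)
    | cons κ' S hκ' ih =>
      rcases S.eq_empty_or_nonempty with rfl | hS'
      · simp
      · have hereS : ∀ κ ∈ S, κ ≠ κ' := fun κ hκ h => hκ' (h ▸ hκ)
        have hint : (⨆ κ ∈ S, F κ) ⊓ F κ' = Z := by
          apply le_antisymm
          · intro x hx
            obtain ⟨hx1, hx2⟩ := Subgroup.mem_inf.mp hx
            have hle : (⨆ κ ∈ S, F κ) ≤ Subgroup.comap (Nmap q (g κ')) Z := by
              refine iSup_le fun κ => iSup_le fun hκ => ?_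
              intro w hw
              exact hNZ κ' κ (hereS κ hκ) w hw
            have hxZ : Nmap q (g κ') x ∈ Z := hle hx1
            rw [Nmap_of_fix hq (mem_fixSub.mp hx2)] at hxZ
            exact hxqZ x hxZ
          · obtain ⟨κ₀, hκ₀⟩ := hS'
            exact le_inf (le_trans (hZF κ₀) (le_iSup₂ (f := fun κ (_ : κ ∈ S) => F κ) κ₀ hκ₀)) (hZF κ')
        have hcard := card_sup_mul_card_inf' (⨆ κ ∈ S, F κ) (F κ')
        rw [hint] at hcard
        have hky := ih hS'
        rw [Finset.prod_cons, Finset.card_cons, Finset.cons_eq_insert, Finset.iSup_insert]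
        calc Nat.card ↥(F κ' ⊔ ⨆ κ ∈ S, F κ) * Nat.card ↥Z ^ (S.card + 1)
            = (Nat.card ↥((⨆ κ ∈ S, F κ) ⊔ F κ') * Nat.card ↥Z) * Nat.card ↥Z ^ S.card := by
              rw [sup_comm]; ring
          _ = (Nat.card ↥(⨆ κ ∈ S, F κ) * Nat.card ↥(F κ')) * Nat.card ↥Z ^ S.card := by
              rw [hcard]
          _ = Nat.card ↥(F κ') * (Nat.card ↥(⨆ κ ∈ S, F κ) * Nat.card ↥Z ^ S.card) := by ring
          _ = Nat.card ↥(F κ') * ((∏ κ ∈ S, Nat.card ↥(F κ)) * Nat.card ↥Z) := by rw [hky]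
          _ = (Nat.card ↥(F κ') * ∏ κ ∈ S, Nat.card ↥(F κ)) * Nat.card ↥Z := by ring
  -- counting
  have hcardF : ∀ (H : Subgroup V),
      Nat.card ↥H = (Finset.univ.filter (fun v => v ∈ H)).card := by
    intro H
    rw [Nat.card_eq_fintype_card, Fintype.card_subtype]
  have hpoint : ∀ v : V,
      (Finset.univ.filter (fun κ => v ∈ F κ)).card = if v ∈ Z then q + 1 else 1 := by
    intro v
    split_ifs with hvZ
    · rw [Finset.filter_true_of_mem (fun κ _ => hZF κ hvZ), Finset.card_univ,
        Fintype.card_option, ZMod.card]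
    · have hv1 : v ≠ 1 := fun h => hvZ (h ▸ Z.one_mem)
      obtain ⟨κ₀, hκ₀⟩ := hG1 v hv1
      rw [Finset.card_eq_one]
      refine ⟨κ₀, ?_⟩
      ext κ
      simp only [Finset.mem_filter, Finset.mem_univ, true_and, Finset.mem_singleton]
      constructor
      · intro hκ
        by_contra hne
        exact hvZ (hFZ κ κ₀ hne (Subgroup.mem_inf.mpr ⟨hκ, hκ₀⟩))
      · rintro rfl
        exact hκ₀
  have hcount : ∑ κ : Option (ZMod q), Nat.card ↥(F κ)
      = Nat.card V + q * Nat.card ↥Z := by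
    calc ∑ κ : Option (ZMod q), Nat.card ↥(F κ)
        = ∑ κ : Option (ZMod q), ∑ v : V, if v ∈ F κ then 1 else 0 := by
          refine Finset.sum_congr rfl fun κ _ => ?_
          rw [hcardF (F κ), Finset.card_filter]
      _ = ∑ v : V, ∑ κ : Option (ZMod q), if v ∈ F κ then 1 else 0 := Finset.sum_comm
      _ = ∑ v : V, (Finset.univ.filter (fun κ => v ∈ F κ)).card := by
          refine Finset.sum_congr rfl fun v _ => ?_
          rw [Finset.card_filter]
      _ = ∑ v : V, (if v ∈ Z then q + 1 else 1) := Finset.sum_congr rfl fun v _ => hpoint v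
      _ = ∑ v : V, (1 + if v ∈ Z then q else 0) := by
          refine Finset.sum_congr rfl fun v _ => ?_
          split_ifs <;> omega
      _ = (∑ _v : V, 1) + ∑ v : V, (if v ∈ Z then q else 0) := Finset.sum_add_distrib
      _ = Nat.card V + q * Nat.card ↥Z := by
          congr 1
          · rw [Finset.sum_const, smul_eq_mul, mul_one, Finset.card_univ,
              Nat.card_eq_fintype_card]
          · rw [Finset.sum_ite, Finset.sum_const, Finset.sum_const_zero, add_zero,
              smul_eq_mul, ← hcardF Z, mul_comm]
  -- the subgroups F κ that exceed Z
  set T : Finset (Option (ZMod q)) := Finset.univ.filter (fun κ => F κ ≠ Z) with hT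
  have hzpos : 0 < Nat.card ↥Z := Nat.card_pos
  have hdvdz : ∀ κ, Nat.card ↥Z ∣ Nat.card ↥(F κ) := fun κ => Subgroup.card_dvd_of_le (hZF κ)
  choose y hy using hdvdz
  have hFcard : ∀ κ, F κ = Z ↔ y κ = 1 := by
    intro κ
    constructor
    · intro h
      have h2 := hy κ
      rw [h] at h2
      have h3 : Nat.card ↥Z * 1 = Nat.card ↥Z * y κ := by rw [mul_one, ← h2]
      exact (Nat.eq_of_mul_eq_mul_left hzpos h3).symm
    · intro h
      have hcards : Nat.card ↥(F κ) ≤ Nat.card ↥Z := by rw [hy κ, h, mul_one]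
      exact (subgroup_eq_of_le_of_card_le' (hZF κ) hcards).symm
  have hyT : ∀ κ ∈ T, 2 ≤ y κ := by
    intro κ hκ
    rw [hT, Finset.mem_filter] at hκ
    have h1 : y κ ≠ 1 := fun h => hκ.2 ((hFcard κ).mpr h)
    have h0 : y κ ≠ 0 := by
      intro h
      have h2 := hy κ
      rw [h, mul_zero] at h2
      exact (Nat.card_pos (α := ↥(F κ))).ne' h2
    omega
  have hyT' : ∀ κ ∉ T, y κ = 1 := by
    intro κ hκ
    rw [hT, Finset.mem_filter] at hκ
    push_neg at hκ
    exact (hFcard κ).mp (hκ (Finset.mem_univ κ))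
  -- case analysis on T
  rcases Nat.lt_or_ge T.card 2 with hTlt | hTge
  · rcases (by omega : T.card = 0 ∨ T.card = 1) with h0 | h1
    · -- all F κ = Z : a acts trivially
      have hall : ∀ κ, F κ = Z := by
        intro κ
        by_contra h
        have : κ ∈ T := by rw [hT, Finset.mem_filter]; exact ⟨Finset.mem_univ κ, h⟩
        rw [Finset.card_eq_zero.mp h0] at this
        simp at this
      have htriv : ∀ v : V, a • v = v := by
        intro v
        rcases eq_or_ne v 1 with rfl | hv
        · exact smul_one a
        · obtain ⟨κ, hκ⟩ := hG1 v hv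
          rw [hall κ] at hκ
          exact ((hmemZ v).mp hκ).1
      exact ha1 (hfaith a htriv)
    · obtain ⟨κ₁, hκ₁⟩ := Finset.card_eq_one.mp h1
      have hother : ∀ κ, κ ≠ κ₁ → F κ = Z := by
        intro κ hne
        by_contra h
        have : κ ∈ T := by rw [hT, Finset.mem_filter]; exact ⟨Finset.mem_univ κ, h⟩
        rw [hκ₁, Finset.mem_singleton] at this
        exact hne this
      have htriv : ∀ v : V, g κ₁ • v = v := by
        intro v
        rcases eq_or_ne v 1 with rfl | hv
        · exact smul_one _
        · obtain ⟨κ, hκ⟩ := hG1 v hv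
          rcases eq_or_ne κ κ₁ with rfl | hne
          · exact mem_fixSub.mp hκ
          · have : v ∈ Z := by rw [← hother κ hne]; exact hκ
            exact mem_fixSub.mp (hZF κ₁ this)
      exact hg1 κ₁ (hfaith (g κ₁) htriv)
  · -- |T| ≥ 2 : counting contradiction
    have hTne : T.Nonempty := Finset.card_pos.mp (by omega)
    have h1 := hsup T hTne
    have h2 : ∏ κ ∈ T, Nat.card ↥(F κ) = Nat.card ↥Z ^ T.card * ∏ κ ∈ T, y κ := by
      rw [Finset.prod_congr rfl (fun κ _ => hy κ), Finset.prod_mul_distrib, Finset.prod_const]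
    have hzpow : 0 < Nat.card ↥Z ^ T.card := pow_pos hzpos _
    have hsupT : Nat.card ↥(⨆ κ ∈ T, F κ) = Nat.card ↥Z * ∏ κ ∈ T, y κ := by
      have h3 : Nat.card ↥(⨆ κ ∈ T, F κ) * Nat.card ↥Z ^ T.card
          = (Nat.card ↥Z * ∏ κ ∈ T, y κ) * Nat.card ↥Z ^ T.card := by
        rw [h1, h2]
        ring
      exact Nat.eq_of_mul_eq_mul_right hzpow h3
    have hle : Nat.card ↥(⨆ κ ∈ T, F κ) ≤ Nat.card V := by
      have hdvd2 : Nat.card ↥(⨆ κ ∈ T, F κ) ∣ Nat.card V := by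
        have h4 := Subgroup.card_dvd_of_le (le_top : (⨆ κ ∈ T, F κ) ≤ ⊤)
        rwa [Subgroup.card_top] at h4
      exact Nat.le_of_dvd Nat.card_pos hdvd2
    have hVge : Nat.card ↥Z * ∏ κ ∈ T, y κ ≤ Nat.card V := hsupT ▸ hle
    -- sum split
    have h7 : (Finset.univ : Finset (Option (ZMod q))).card = q + 1 := by
      rw [Finset.card_univ, Fintype.card_option, ZMod.card]
    have h7' : Fintype.card (Option (ZMod q)) = q + 1 := by
      rw [Fintype.card_option, ZMod.card]
    have hcT : T.card ≤ q + 1 := by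
      have := Finset.card_le_univ T
      omega
    have hsum : ∑ κ : Option (ZMod q), Nat.card ↥(F κ)
        = Nat.card ↥Z * ∑ κ ∈ T, y κ + (q + 1 - T.card) * Nat.card ↥Z := by
      have hsplit := Finset.sum_filter_add_sum_filter_not Finset.univ (fun κ => F κ ≠ Z)
        (fun κ => Nat.card ↥(F κ))
      have hTc : (Finset.univ.filter (fun κ => ¬ F κ ≠ Z)).card = q + 1 - T.card := by
        have h6 := Finset.card_filter_add_card_filter_not
          (s := (Finset.univ : Finset (Option (ZMod q)))) (p := fun κ => F κ ≠ Z)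
        rw [hT]
        omega
      have hpart1 : ∑ κ ∈ T, Nat.card ↥(F κ) = Nat.card ↥Z * ∑ κ ∈ T, y κ := by
        rw [Finset.mul_sum]
        exact Finset.sum_congr rfl fun κ _ => hy κ
      have hpart2 : ∑ κ ∈ Finset.univ.filter (fun κ => ¬ F κ ≠ Z), Nat.card ↥(F κ)
          = (q + 1 - T.card) * Nat.card ↥Z := by
        have : ∀ κ ∈ Finset.univ.filter (fun κ => ¬ F κ ≠ Z),
            Nat.card ↥(F κ) = Nat.card ↥Z := by
          intro κ hκ
          rw [Finset.mem_filter] at hκ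
          rw [not_not.mp hκ.2]
        rw [Finset.sum_congr rfl this, Finset.sum_const, hTc, smul_eq_mul]
      rw [← hsplit, ← hT, hpart1, hpart2]
    have hineq : ∏ κ ∈ T, y κ + q ≤ (∑ κ ∈ T, y κ) + (q + 1 - T.card) := by
      have e1 : Nat.card ↥Z * ((∑ κ ∈ T, y κ) + (q + 1 - T.card))
          = Nat.card V + q * Nat.card ↥Z := by
        calc Nat.card ↥Z * ((∑ κ ∈ T, y κ) + (q + 1 - T.card))
            = Nat.card ↥Z * ∑ κ ∈ T, y κ + (q + 1 - T.card) * Nat.card ↥Z := by ring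
          _ = Nat.card V + q * Nat.card ↥Z := by rw [← hsum, hcount]
      have e2 : Nat.card ↥Z * (∏ κ ∈ T, y κ + q)
          ≤ Nat.card ↥Z * ((∑ κ ∈ T, y κ) + (q + 1 - T.card)) := by
        have e3 : Nat.card ↥Z * (∏ κ ∈ T, y κ + q)
            = Nat.card ↥Z * ∏ κ ∈ T, y κ + q * Nat.card ↥Z := by ring
        omega
      exact Nat.le_of_mul_le_mul_left e2 hzpos
    have harith := arith_lemma' y T hTne hyT
    have hsum_split : ∑ κ ∈ T, y κ = (∑ κ ∈ T, (y κ - 1)) + T.card := by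
      calc ∑ κ ∈ T, y κ = ∑ κ ∈ T, ((y κ - 1) + 1) := by
            refine Finset.sum_congr rfl fun κ hκ => ?_
            have := hyT κ hκ
            omega
        _ = (∑ κ ∈ T, (y κ - 1)) + ∑ _κ ∈ T, 1 := Finset.sum_add_distrib
        _ = (∑ κ ∈ T, (y κ - 1)) + T.card := by
            rw [Finset.sum_const, smul_eq_mul, mul_one]
    omega

/-- If an abelian `q`-group `A` (`q` an odd prime) acts faithfully by automorphisms and
half-transitively (all orbits of nonidentity elements have the same size) on an elementary
abelian `p`-group `V` of coprime order, then `A` is cyclic. -/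
theorem stmt_15 {q p : ℕ} (hq : q.Prime) (hq2 : q ≠ 2) (hp : p.Prime)
    {A V : Type*} [CommGroup A] [Fintype A] [Group V] [Fintype V]
    (hVcomm : ∀ x y : V, x * y = y * x) (hVel : ∀ x : V, x ^ p = 1)
    (hA : IsPGroup q A)
    (hcop : Nat.Coprime (Nat.card A) (Nat.card V))
    [MulDistribMulAction A V]
    (hfaith : ∀ a : A, (∀ v : V, a • v = v) → a = 1)
    (hhalf : ∃ n : ℕ, ∀ v : V, v ≠ 1 → Nat.card (MulAction.orbit A v) = n) :
    IsCyclic A := by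
  letI : CommGroup V := { (inferInstance : Group V) with mul_comm := hVcomm }
  exact stmt_15' hq hp hVel hA hcop hfaith hhalf
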